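/- Suppose every job j ∈ J satisfies d_j ≤ c_min/2. Then J can be partitioned into at most 8r feasible rounds, where r is the congestion of the instance. -/

import Mathlib

open scoped Classical

namespace PathUFP

variable {ι : Type*}

/-- Job `i` uses the edge `e_{k+1}` (for `k : Fin m`, edges being 1-indexed
`e_1, …, e_m`) iff `s_i < k + 1 ≤ t_i`, i.e. iff `s_i ≤ k < t_i`. -/
def uses (s t : ι → ℕ) {m : ℕ} (i : ι) (k : Fin m) : Prop :=
  s i ≤ (k : ℕ) ∧ (k : ℕ) < t i

/-- The load of edge `e_{k+1}`: total demand of the jobs using it. -/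
noncomputable def load [Fintype ι] (s t : ι → ℕ) (d : ι → ℝ) {m : ℕ} (k : Fin m) : ℝ :=
  ∑ i : ι, if uses s t i k then d i else 0

/-- The congestion `r = max_k ⌈l_k / c_k⌉` of the instance. -/
noncomputable def congestion [Fintype ι] (s t : ι → ℕ) (d : ι → ℝ) {m : ℕ}
    (hm : 0 < m) (c : Fin m → ℝ) : ℤ :=
  Finset.univ.sup' ⟨⟨0, hm⟩, Finset.mem_univ _⟩ fun k => ⌈load s t d k / c k⌉

/-- The minimum edge capacity. -/
noncomputable def cmin {m : ℕ} (hm : 0 < m) (c : Fin m → ℝ) : ℝ :=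
  Finset.univ.inf' ⟨⟨0, hm⟩, Finset.mem_univ _⟩ c

/-- `f` is a Round-UFP packing of the jobs into `K` feasible rounds: on each round and
each edge, the total demand of the jobs of that round using that edge is at most the
capacity of the edge. -/
def IsPacking [Fintype ι] (s t : ι → ℕ) (d : ι → ℝ) {m : ℕ} (c : Fin m → ℝ)
    {K : ℕ} (f : ι → Fin K) : Prop :=
  ∀ (r : Fin K) (k : Fin m),
    (∑ i : ι, if f i = r ∧ uses s t i k then d i else 0) ≤ c k

end PathUFP

/-!
Process the jobs by first fit, in increasing order of bottleneck capacity (ties broken by left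
endpoint). When job `a` with bottleneck capacity `b` is placed, every earlier job sharing an edge
with `a` also crosses one of three fixed edges of capacity at most `b`: the last such edge left of
`a`, the first one inside `a`, or the first one right of `a`. A round that cannot take `a` carries
more than `b - d_a ≥ b / 2` on some edge of `a`, hence on those three edges together; their total
load is at most `3 r b`, so `a` fits into one of the first `6r` rounds.
-/

namespace PathUFP

section Hitting

variable {m : ℕ} (T : Finset (Fin m))

theorem exists_hitting_left (n : ℕ) :
    ∃ E ⊆ T, E.card ≤ 1 ∧ ∀ lo hi : ℕ, ∀ q ∈ T, lo ≤ (q : ℕ) → (q : ℕ) < n → n ≤ hi →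
      ∃ x ∈ E, lo ≤ (x : ℕ) ∧ (x : ℕ) < hi := by
  by_cases h : (T.filter fun x : Fin m => (x : ℕ) < n).Nonempty
  · obtain ⟨huT, hun⟩ := Finset.mem_filter.mp ((T.filter _).max'_mem h)
    refine ⟨{_}, Finset.singleton_subset_iff.mpr huT, by simp,
      fun lo hi q hq hlo hqn hn => ⟨_, Finset.mem_singleton_self _, ?_, by omega⟩⟩
    exact hlo.trans (Fin.le_iff_val_le_val.mp ((T.filter _).le_max' q
      (Finset.mem_filter.mpr ⟨hq, hqn⟩)))
  · exact ⟨∅, Finset.empty_subset _, by simp,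
      fun lo hi q hq _ hqn _ => absurd ⟨q, Finset.mem_filter.mpr ⟨hq, hqn⟩⟩ h⟩

theorem exists_hitting_right (n : ℕ) :
    ∃ E ⊆ T, E.card ≤ 1 ∧ ∀ lo hi : ℕ, ∀ q ∈ T, lo ≤ n → n ≤ (q : ℕ) → (q : ℕ) < hi →
      ∃ x ∈ E, lo ≤ (x : ℕ) ∧ (x : ℕ) < hi := by
  by_cases h : (T.filter fun x : Fin m => n ≤ (x : ℕ)).Nonempty
  · obtain ⟨hvT, hnv⟩ := Finset.mem_filter.mp ((T.filter _).min'_mem h)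
    refine ⟨{_}, Finset.singleton_subset_iff.mpr hvT, by simp,
      fun lo hi q hq hlo hnq hqh => ⟨_, Finset.mem_singleton_self _, by omega, ?_⟩⟩
    exact lt_of_le_of_lt (Fin.le_iff_val_le_val.mp ((T.filter _).min'_le q
      (Finset.mem_filter.mpr ⟨hq, hnq⟩))) hqh
  · exact ⟨∅, Finset.empty_subset _, by simp,
      fun lo hi q hq _ hnq _ => absurd ⟨q, Finset.mem_filter.mpr ⟨hq, hnq⟩⟩ h⟩

end Hitting

section FirstFit

variable {ι : Type*} {m : ℕ} (c : Fin m → ℝ) (s t : ι → ℕ) (d : ι → ℝ)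

def IsBottleneck (i : ι) (k : Fin m) : Prop :=
  uses s t i k ∧ ∀ k', uses s t i k' → c k ≤ c k'

theorem exists_isBottleneck {i : ι} (hst : s i < t i) (htm : t i ≤ m) :
    ∃ k, IsBottleneck c s t i k := by
  obtain ⟨k, hk, hmin⟩ := Finset.exists_min_image (Finset.univ.filter (uses s t i)) c
    ⟨⟨s i, by omega⟩, Finset.mem_filter.mpr ⟨Finset.mem_univ _, le_rfl, hst⟩⟩
  exact ⟨k, (Finset.mem_filter.mp hk).2,
    fun k' hk' => hmin k' (Finset.mem_filter.mpr ⟨Finset.mem_univ _, hk'⟩)⟩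

abbrev FirstFitKey (q : ι → Fin m) (i : ι) : ℝ ×ₗ ℕ := toLex (c (q i), s i)

theorem exists_cover (q : ι → Fin m) (hq : ∀ i, IsBottleneck c s t i (q i)) (a : ι) :
    ∃ E : Finset (Fin m), E.card ≤ 3 ∧ (∀ x ∈ E, c x ≤ c (q a)) ∧
      ∀ i, FirstFitKey c s q i ≤ FirstFitKey c s q a → ∀ k : Fin m, uses s t i k → uses s t a k →
        ∃ x ∈ E, uses s t i x := by
  set T := Finset.univ.filter fun x => c x ≤ c (q a)
  obtain ⟨E₁, hE₁T, hE₁, hit₁⟩ := exists_hitting_left T (s a)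
  obtain ⟨E₂, hE₂T, hE₂, hit₂⟩ := exists_hitting_right T (s a)
  obtain ⟨E₃, hE₃T, hE₃, hit₃⟩ := exists_hitting_right T (t a)
  refine ⟨E₁ ∪ E₂ ∪ E₃, ?_, fun x hx => ?_, fun i hkey k hik hak => ?_⟩
  · have := Finset.card_union_le (E₁ ∪ E₂) E₃
    have := Finset.card_union_le E₁ E₂
    omega
  · have hxT : x ∈ T := by
      rcases Finset.mem_union.mp hx with hx | hx
      · rcases Finset.mem_union.mp hx with hx | hx
        exacts [hE₁T hx, hE₂T hx]
      · exact hE₃T hx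
    exact (Finset.mem_filter.mp hxT).2
  obtain ⟨hbi, hsi⟩ := Prod.Lex.toLex_le_toLex'.mp hkey
  have hqT : q i ∈ T := Finset.mem_filter.mpr ⟨Finset.mem_univ _, hbi⟩
  obtain ⟨hsq, hqt⟩ := (hq i).1
  obtain ⟨hsk, hkt⟩ := hik
  obtain ⟨hak, hakt⟩ := hak
  rcases lt_or_ge (q i : ℕ) (s a) with hleft | hqs
  · obtain ⟨x, hx, hix⟩ := hit₁ (s i) (t i) (q i) hqT hsq hleft (by omega)
    exact ⟨x, Finset.mem_union_left _ (Finset.mem_union_left _ hx), hix⟩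
  rcases lt_or_ge (q i : ℕ) (t a) with hinside | hright
  · -- `q i` lies on `a`, so both bottlenecks are equal and the tie-break puts `i` left of `a`.
    have hb : c (q i) = c (q a) := le_antisymm hbi ((hq a).2 _ ⟨hqs, hinside⟩)
    obtain ⟨x, hx, hix⟩ := hit₂ (s i) (t i) (q i) hqT (hsi hb) hqs hqt
    exact ⟨x, Finset.mem_union_left _ (Finset.mem_union_right _ hx), hix⟩
  · obtain ⟨x, hx, hix⟩ := hit₃ (s i) (t i) (q i) hqT (by omega) hright hqt
    exact ⟨x, Finset.mem_union_right _ hx, hix⟩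

noncomputable def roundLoad (S : Finset ι) (f : ι → ℕ) (ρ : ℕ) (k : Fin m) : ℝ :=
  ∑ i ∈ S, if f i = ρ ∧ uses s t i k then d i else 0

variable {s t d}

theorem roundLoad_le_sum_of_cover (hd : ∀ i, 0 ≤ d i) {S : Finset ι} {f : ι → ℕ} {ρ : ℕ}
    {k : Fin m} {E : Finset (Fin m)} (hE : ∀ i ∈ S, uses s t i k → ∃ x ∈ E, uses s t i x) :
    roundLoad s t d S f ρ k ≤ ∑ x ∈ E, roundLoad s t d S f ρ x := by
  simp only [roundLoad]
  rw [Finset.sum_comm (s := E)]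
  refine Finset.sum_le_sum fun i hi => ?_
  split_ifs with h
  · obtain ⟨x, hx, hix⟩ := hE i hi h.2
    calc d i = if f i = ρ ∧ uses s t i x then d i else 0 := (if_pos ⟨h.1, hix⟩).symm
      _ ≤ _ := Finset.single_le_sum (f := fun x => if f i = ρ ∧ uses s t i x then d i else 0)
        (fun x _ => ite_nonneg (hd i) le_rfl) hx
  · exact Finset.sum_nonneg fun x _ => ite_nonneg (hd i) le_rfl

theorem load_nonneg [Fintype ι] (hd : ∀ i, 0 ≤ d i) (k : Fin m) : 0 ≤ load s t d k :=
  Finset.sum_nonneg fun i _ => ite_nonneg (hd i) le_rfl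

theorem le_load [Fintype ι] (hd : ∀ i, 0 ≤ d i) {i : ι} {k : Fin m} (h : uses s t i k) :
    d i ≤ load s t d k := by
  calc d i = if uses s t i k then d i else 0 := (if_pos h).symm
    _ ≤ load s t d k := Finset.single_le_sum (f := fun j => if uses s t j k then d j else 0)
      (fun j _ => ite_nonneg (hd j) le_rfl) (Finset.mem_univ i)

theorem sum_roundLoad_le_load [Fintype ι] (hd : ∀ i, 0 ≤ d i) (S : Finset ι) (f : ι → ℕ)
    (K : ℕ) (k : Fin m) :
    ∑ ρ ∈ Finset.range K, roundLoad s t d S f ρ k ≤ load s t d k := by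
  simp only [roundLoad, load]
  rw [Finset.sum_comm]
  calc ∑ i ∈ S, ∑ ρ ∈ Finset.range K, (if f i = ρ ∧ uses s t i k then d i else 0)
      ≤ ∑ i ∈ S, if uses s t i k then d i else 0 := by
        refine Finset.sum_le_sum fun i _ => ?_
        simp only [ite_and, Finset.sum_ite_eq]
        split_ifs <;> simp [hd i]
    _ ≤ _ := Finset.sum_le_sum_of_subset_of_nonneg (Finset.subset_univ S)
        fun j _ _ => ite_nonneg (hd j) le_rfl

theorem exists_round_fits [Fintype ι] (hd : ∀ i, 0 < d i) (q : ι → Fin m)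
    (hq : ∀ i, IsBottleneck c s t i (q i)) {R : ℕ} (hR : ∀ k, load s t d k ≤ R * c k)
    {a : ι} (ha : 2 * d a ≤ c (q a)) {S : Finset ι}
    (hS : ∀ i ∈ S, FirstFitKey c s q i ≤ FirstFitKey c s q a) (f : ι → ℕ) :
    ∃ ρ < 6 * R, ∀ k, uses s t a k → roundLoad s t d S f ρ k + d a ≤ c k := by
  have hd₀ : ∀ i, 0 ≤ d i := fun i => (hd i).le
  obtain ⟨E, hEcard, hEcap, hcover⟩ := exists_cover c s t q hq a
  set b := c (q a)
  have hRpos : 0 < R := by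
    have := (le_load hd₀ (hq a).1).trans (hR (q a))
    by_contra! h0
    simp only [Nat.le_zero.mp h0, Nat.cast_zero, zero_mul] at this
    linarith [hd a]
  by_contra! hfull
  have hround : ∀ ρ ∈ Finset.range (6 * R), b / 2 < ∑ x ∈ E, roundLoad s t d S f ρ x := by
    intro ρ hρ
    obtain ⟨k, hak, hk⟩ := hfull ρ (Finset.mem_range.mp hρ)
    have hbk := (hq a).2 k hak
    have := roundLoad_le_sum_of_cover hd₀ (ρ := ρ) (f := f)
      fun i hi hik => hcover i (hS i hi) k hik hak
    linarith
  have hlower := Finset.sum_lt_sum_of_nonempty (Finset.nonempty_range_iff.mpr (by omega)) hround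
  rw [Finset.sum_const, Finset.card_range, nsmul_eq_mul, Finset.sum_comm] at hlower
  have hb : 0 ≤ (R : ℝ) * b := mul_nonneg (Nat.cast_nonneg R) (by linarith [hd a])
  have hupper : ∑ x ∈ E, ∑ ρ ∈ Finset.range (6 * R), roundLoad s t d S f ρ x ≤ 3 * (R * b) :=
    calc _ ≤ ∑ _x ∈ E, (R : ℝ) * b := Finset.sum_le_sum fun x hx =>
          (sum_roundLoad_le_load hd₀ S f _ x).trans
            ((hR x).trans (mul_le_mul_of_nonneg_left (hEcap x hx) (Nat.cast_nonneg R)))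
      _ = E.card * (R * b) := by rw [Finset.sum_const, nsmul_eq_mul]
      _ ≤ 3 * (R * b) := mul_le_mul_of_nonneg_right (by exact_mod_cast hEcard) hb
  push_cast at hlower
  linarith

theorem roundLoad_insert_update {S : Finset ι} {a : ι} (haS : a ∉ S) (f : ι → ℕ) (ρ₀ ρ : ℕ)
    (k : Fin m) :
    roundLoad s t d (insert a S) (Function.update f a ρ₀) ρ k =
      roundLoad s t d S f ρ k + if ρ₀ = ρ ∧ uses s t a k then d a else 0 := by
  rw [roundLoad, Finset.sum_insert haS, Function.update_self, add_comm]
  congr 1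
  refine Finset.sum_congr rfl fun i hi => ?_
  rw [Function.update_of_ne (ne_of_mem_of_not_mem hi haS)]

theorem exists_firstFit_assignment [Fintype ι] (hc : ∀ k, 0 ≤ c k) (hd : ∀ i, 0 < d i)
    (q : ι → Fin m) (hq : ∀ i, IsBottleneck c s t i (q i)) {R : ℕ}
    (hR : ∀ k, load s t d k ≤ R * c k) (hsmall : ∀ i, 2 * d i ≤ c (q i)) (S : Finset ι) :
    ∃ f : ι → ℕ, (∀ i ∈ S, f i < 6 * R) ∧ ∀ ρ k, roundLoad s t d S f ρ k ≤ c k := by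
  induction S using Finset.induction_on_max_value (FirstFitKey c s q) with
  | empty => exact ⟨fun _ => 0, by simp, fun ρ k => by simp [roundLoad, hc k]⟩
  | insert a S haS hmax ih =>
    obtain ⟨f, hfR, hf⟩ := ih
    obtain ⟨ρ₀, hρ₀, hfit⟩ := exists_round_fits c hd q hq hR (hsmall a) hmax f
    refine ⟨Function.update f a ρ₀, fun i hi => ?_, fun ρ k => ?_⟩
    · rcases Finset.mem_insert.mp hi with rfl | hi
      · rwa [Function.update_self]
      · rw [Function.update_of_ne (ne_of_mem_of_not_mem hi haS)]
        exact hfR i hi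
    · rw [roundLoad_insert_update haS]
      split_ifs with h
      · rw [← h.1]
        exact hfit k h.2
      · rw [add_zero]
        exact hf ρ k

theorem isPacking_of_roundLoad_le [Fintype ι] {K : ℕ} (f : ι → ℕ) (hfK : ∀ i, f i < K)
    (hf : ∀ ρ k, roundLoad s t d Finset.univ f ρ k ≤ c k) :
    IsPacking s t d c fun i => (⟨f i, hfK i⟩ : Fin K) := by
  intro ρ k
  simpa only [roundLoad, Fin.ext_iff] using hf ρ k

end FirstFit

section Congestion

variable {ι : Type*} [Fintype ι] {m : ℕ} (hm : 0 < m) (c : Fin m → ℝ) (s t : ι → ℕ)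
  (d : ι → ℝ)

theorem cmin_le (k : Fin m) : cmin hm c ≤ c k :=
  Finset.inf'_le _ (Finset.mem_univ k)

theorem load_le_congestion_mul (hc : ∀ k, 0 < c k) (k : Fin m) :
    load s t d k ≤ congestion s t d hm c * c k := by
  have h : ⌈load s t d k / c k⌉ ≤ congestion s t d hm c :=
    Finset.le_sup' (fun k => ⌈load s t d k / c k⌉) (Finset.mem_univ k)
  rw [← div_le_iff₀ (hc k)]
  exact (Int.le_ceil _).trans (by exact_mod_cast h)

theorem congestion_nonneg (hc : ∀ k, 0 < c k) (hd : ∀ i, 0 ≤ d i) :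
    0 ≤ congestion s t d hm c :=
  (Int.ceil_nonneg (div_nonneg (load_nonneg hd _) (hc ⟨0, hm⟩).le)).trans
    (Finset.le_sup' (fun k => ⌈load s t d k / c k⌉) (Finset.mem_univ ⟨0, hm⟩))

end Congestion

end PathUFP

open PathUFP in
/-- Suppose every job `j ∈ J` satisfies `d_j ≤ c_min / 2`. Then `J` can
be partitioned into at most `8r` feasible rounds, where `r` is the congestion of the
instance. -/
theorem packing_of_small_jobs {ι : Type*} [Fintype ι] {m : ℕ} (hm : 0 < m)
    (c : Fin m → ℝ) (hc : ∀ k, 0 < c k)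
    (s t : ι → ℕ) (d : ι → ℝ)
    (hst : ∀ i, s i < t i) (htm : ∀ i, t i ≤ m) (hd : ∀ i, 0 < d i)
    (hsmall : ∀ i, d i ≤ cmin hm c / 2) :
    ∃ (K : ℕ) (f : ι → Fin K),
      (K : ℤ) ≤ 8 * congestion s t d hm c ∧ IsPacking s t d c f := by
  have hr := congestion_nonneg hm c s t d hc fun i => (hd i).le
  set R := (congestion s t d hm c).toNat
  have hR : ∀ k, load s t d k ≤ R * c k := fun k => by
    have hRr : ((R : ℤ) : ℝ) = congestion s t d hm c := by exact_mod_cast Int.toNat_of_nonneg hr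
    simpa only [← hRr, Int.cast_natCast] using load_le_congestion_mul hm c s t d hc k
  choose q hq using fun i => exists_isBottleneck c s t (hst i) (htm i)
  have hsmall' : ∀ i, 2 * d i ≤ c (q i) := fun i => by
    linarith [hsmall i, cmin_le hm c (q i)]
  obtain ⟨f, hfR, hf⟩ := exists_firstFit_assignment c (fun k => (hc k).le) hd q hq hR hsmall'
    Finset.univ
  exact ⟨6 * R, _, by omega, isPacking_of_roundLoad_le c f (fun i => hfR i (Finset.mem_univ i)) hf⟩
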